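/- Let G be a simple graph with maximum degree Δ, let u be a vertex of G of degree 1 with unique neighbor v, and suppose G − u admits a (Δ+2, 2)-incidence coloring. Then G admits a (Δ+2, 2)-incidence coloring. -/

import Mathlib

/-!
Colour `G - u` first. The incidence `(v, vu)` must avoid every colour on the incidences out of
`v` (at most `deg v - 1` of them) and every colour entering `v` (at most `2`), while `(u, uv)`
must only avoid the colours out of `v` and `(v, vu)`. Giving `(u, uv)` a colour that already
enters `v` (or any colour avoiding those out of `v`, if none enters `v`) keeps at most two
colours entering `v`; then `deg v + 1 ≤ Δ + 1` colours are forbidden for `(v, vu)`, so one of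
the `Δ + 2` colours is left.
-/

/-- An incidence of `G` is a pair `(v, vw)` with `G.Adj v w`, encoded as the ordered pair
`(v, w)`.  Two incidences `(v, vw)` and `(v', v'w')` are adjacent if `v = v'`, `w = v'`
or `v = w'`.  A `(k, l)`-incidence coloring is a proper coloring of the incidences with at
most `k` colors such that for every vertex `v` at most `l` colors appear on the incoming
incidences `(u, uv)`. -/
def IsIncColoring {V : Type*} (G : SimpleGraph V) (k l : ℕ) (c : V → V → Fin k) : Prop :=
  (∀ v w v' w' : V, G.Adj v w → G.Adj v' w' → (v, w) ≠ (v', w') →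
      (v = v' ∨ w = v' ∨ v = w') → c v w ≠ c v' w') ∧
  (∀ v : V, {x : Fin k | ∃ u, G.Adj u v ∧ c u v = x}.ncard ≤ l)

/-- `G` has a `(k, l)`-incidence coloring. -/
def HasIncColoring {V : Type*} (G : SimpleGraph V) (k l : ℕ) : Prop :=
  ∃ c : V → V → Fin k, IsIncColoring G k l c

/-- A graph is outerplanar iff it has a one-page book embedding: the vertices can be placed
(injectively) on a line so that no two edges interleave. -/
def Outerplanar {V : Type*} (G : SimpleGraph V) : Prop :=
  ∃ f : V → ℝ, Function.Injective f ∧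
    ∀ a b c d : V, G.Adj a b → G.Adj c d →
      ¬(f a < f c ∧ f c < f b ∧ f b < f d)

section

open SimpleGraph

variable {V : Type*} {k l : ℕ}

def inColors (G : SimpleGraph V) (c : V → V → Fin k) (v : V) : Set (Fin k) :=
  {x | ∃ u, G.Adj u v ∧ c u v = x}

def outColors (G : SimpleGraph V) (c : V → V → Fin k) (v : V) : Set (Fin k) :=
  c v '' G.neighborSet v

lemma IsIncColoring.ncard_inColors_le {G : SimpleGraph V} {c : V → V → Fin k}
    (hc : IsIncColoring G k l c) (v : V) : (inColors G c v).ncard ≤ l :=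
  hc.2 v

lemma IsIncColoring.disjoint_inColors_outColors {G : SimpleGraph V} {c : V → V → Fin k}
    (hc : IsIncColoring G k l c) (v : V) : Disjoint (inColors G c v) (outColors G c v) := by
  rw [Set.disjoint_left]
  rintro _ ⟨w, hwv, rfl⟩ ⟨w', hvw', hcol⟩
  exact hc.1 w v v w' hwv hvw' (fun h => hwv.ne (congrArg Prod.fst h)) (Or.inr (Or.inl rfl))
    hcol.symm

lemma ncard_neighborSet_deleteIncidenceSet [Fintype V] {G : SimpleGraph V} [DecidableRel G.Adj]
    {u v : V} (h : G.Adj v u) :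
    ((G.deleteIncidenceSet u).neighborSet v).ncard = G.degree v - 1 := by
  have hset : (G.deleteIncidenceSet u).neighborSet v = G.neighborSet v \ {u} := by
    ext w
    simp [deleteIncidenceSet_adj, h.ne]
  rw [hset, Set.ncard_sdiff_singleton_of_mem (show u ∈ G.neighborSet v from h),
    Set.ncard_eq_toFinset_card', Set.toFinset_card, card_neighborSet_eq_degree]

lemma adj_iff_eq_of_degree_eq_one [Fintype V] {G : SimpleGraph V} [DecidableRel G.Adj] {u v : V}
    (hdeg : G.degree u = 1) (hadj : G.Adj u v) (w : V) : G.Adj u w ↔ w = v := by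
  obtain ⟨x, -, huniq⟩ := degree_eq_one_iff_existsUnique_adj.1 hdeg
  exact ⟨fun hw => (huniq w hw).trans (huniq v hadj).symm, fun h => h ▸ hadj⟩

lemma HasIncColoring.deleteIncidenceSet_of_induce {G : SimpleGraph V} {u : V} (hk : 0 < k)
    (h : HasIncColoring (G.induce {x | x ≠ u}) k l) :
    HasIncColoring (G.deleteIncidenceSet u) k l := by
  classical
  obtain ⟨c, hproper, hin⟩ := h
  let d : V → V → Fin k := fun x y =>
    if h : x ≠ u ∧ y ≠ u then c ⟨x, h.1⟩ ⟨y, h.2⟩ else ⟨0, hk⟩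
  have hd : ∀ x y (hx : x ≠ u) (hy : y ≠ u), d x y = c ⟨x, hx⟩ ⟨y, hy⟩ :=
    fun x y hx hy => by simp [d, hx, hy]
  refine ⟨d, ?_, fun x => ?_⟩
  · intro a b a' b' hab hab' hne hadj
    rw [deleteIncidenceSet_adj] at hab hab'
    rw [hd a b hab.2.1 hab.2.2, hd a' b' hab'.2.1 hab'.2.2]
    refine hproper _ _ _ _ hab.1 hab'.1 (fun h => hne ?_) ?_
    · simp only [Prod.mk.injEq, Subtype.mk.injEq] at h
      rw [h.1, h.2]
    · simpa only [Subtype.mk.injEq] using hadj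
  · show (inColors _ d x).ncard ≤ l
    by_cases hx : x = u
    · have hempty : inColors (G.deleteIncidenceSet u) d x = ∅ := by
        ext
        simp [inColors, deleteIncidenceSet_adj, hx]
      simp [hempty]
    · refine le_trans (Set.ncard_le_ncard ?_) (hin ⟨x, hx⟩)
      rintro _ ⟨w, hwx, rfl⟩
      rw [deleteIncidenceSet_adj] at hwx
      exact ⟨⟨w, hwx.2.1⟩, hwx.1, (hd w x hwx.2.1 hx).symm⟩

lemma Set.exists_notMem_insert_ncard_le {α : Type*} {I O : Set α} (hIO : Disjoint I O)
    (hO : ∃ x, x ∉ O) (hI : I.ncard ≤ l) (hl : 1 ≤ l) :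
    ∃ x ∉ O, (insert x I).ncard ≤ l := by
  rcases I.eq_empty_or_nonempty with rfl | ⟨x, hx⟩
  · obtain ⟨x, hx⟩ := hO
    exact ⟨x, hx, by simpa using hl⟩
  · exact ⟨x, hIO.notMem_of_mem_left hx, by rwa [Set.insert_eq_of_mem hx]⟩

lemma Fin.exists_notMem_of_ncard_lt {s : Set (Fin k)} (h : s.ncard < k) : ∃ x, x ∉ s := by
  obtain ⟨x, -, hx⟩ := Set.exists_mem_notMem_of_ncard_lt_ncard (s := s) (t := Set.univ)
    (by rwa [Set.ncard_univ, Nat.card_fin])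
  exact ⟨x, hx⟩

section PendantExtension

variable {G : SimpleGraph V} {u v : V} {c : V → V → Fin k} {α β : Fin k}

open Classical in
noncomputable def extendPendant (u : V) (α β : Fin k) (c : V → V → Fin k) :
    V → V → Fin k :=
  fun x y => if x = u then α else if y = u then β else c x y

lemma extendPendant_left (y : V) : extendPendant u α β c u y = α := if_pos rfl

lemma extendPendant_right {x : V} (hx : x ≠ u) : extendPendant u α β c x u = β := by
  simp [extendPendant, hx]

lemma extendPendant_of_ne {x y : V} (hx : x ≠ u) (hy : y ≠ u) :
    extendPendant u α β c x y = c x y := by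
  simp [extendPendant, hx, hy]

lemma adj_cases_of_pendant (hu : ∀ w, G.Adj u w ↔ w = v) {a b : V} (h : G.Adj a b) :
    (a = u ∧ b = v) ∨ (a = v ∧ b = u) ∨ (G.deleteIncidenceSet u).Adj a b := by
  by_cases ha : a = u
  · exact .inl ⟨ha, (hu b).1 (ha ▸ h)⟩
  by_cases hb : b = u
  · exact .inr (.inl ⟨(hu a).1 (hb ▸ h.symm), hb⟩)
  exact .inr (.inr (deleteIncidenceSet_adj.2 ⟨h, ha, hb⟩))

lemma ncard_inColors_extendPendant_le (hu : ∀ w, G.Adj u w ↔ w = v)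
    (hc : IsIncColoring (G.deleteIncidenceSet u) k l c) (hl : 1 ≤ l)
    (hα : (insert α (inColors (G.deleteIncidenceSet u) c v)).ncard ≤ l) (x : V) :
    (inColors G (extendPendant u α β c) x).ncard ≤ l := by
  rcases eq_or_ne x u with rfl | hxu
  · refine (Set.ncard_le_ncard (t := {β}) ?_).trans (by simpa using hl)
    rintro _ ⟨w, hw, rfl⟩
    exact extendPendant_right hw.ne
  rcases eq_or_ne x v with rfl | hxv
  · refine (Set.ncard_le_ncard ?_).trans hα
    rintro _ ⟨w, hw, rfl⟩
    rcases eq_or_ne w u with rfl | hwu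
    · exact .inl (extendPendant_left _)
    · exact .inr ⟨w, deleteIncidenceSet_adj.2 ⟨hw, hwu, hxu⟩,
        (extendPendant_of_ne hwu hxu).symm⟩
  · refine (Set.ncard_le_ncard ?_).trans (hc.ncard_inColors_le x)
    rintro _ ⟨w, hw, rfl⟩
    have hwu : w ≠ u := by rintro rfl; exact hxv ((hu x).1 hw)
    exact ⟨w, deleteIncidenceSet_adj.2 ⟨hw, hwu, hxu⟩, (extendPendant_of_ne hwu hxu).symm⟩

lemma extendPendant_proper (hu : ∀ w, G.Adj u w ↔ w = v)
    (hc : IsIncColoring (G.deleteIncidenceSet u) k l c)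
    (hαβ : α ≠ β) (hα : α ∉ outColors (G.deleteIncidenceSet u) c v)
    (hβ : β ∉ outColors (G.deleteIncidenceSet u) c v ∪ inColors (G.deleteIncidenceSet u) c v)
    (a b a' b' : V) (hab : G.Adj a b) (hab' : G.Adj a' b') (hne : (a, b) ≠ (a', b'))
    (hadj : a = a' ∨ b = a' ∨ a = b') :
    extendPendant u α β c a b ≠ extendPendant u α β c a' b' := by
  have hvu : v ≠ u := fun h => G.irrefl ((hu u).2 h.symm)
  have hα' : ∀ {b}, (G.deleteIncidenceSet u).Adj v b → α ≠ c v b :=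
    fun h hcol => hα ⟨_, h, hcol.symm⟩
  have hβ' : ∀ {a b}, (G.deleteIncidenceSet u).Adj a b → a = v ∨ b = v → β ≠ c a b := by
    rintro a b h (rfl | rfl) hcol
    exacts [hβ (.inl ⟨_, h, hcol.symm⟩), hβ (.inr ⟨_, h, hcol.symm⟩)]
  rcases adj_cases_of_pendant hu hab with ⟨ha, hb⟩ | ⟨ha, hb⟩ | h <;>
    rcases adj_cases_of_pendant hu hab' with ⟨ha', hb'⟩ | ⟨ha', hb'⟩ | h'
  · exact absurd (by rw [ha, hb, ha', hb']) hne
  · subst a b a' b'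
    rw [extendPendant_left, extendPendant_right hvu]; exact hαβ
  · subst a b
    obtain ⟨-, ha', hb'⟩ := deleteIncidenceSet_adj.1 h'
    obtain rfl : a' = v := by tauto
    rw [extendPendant_left, extendPendant_of_ne hvu hb']; exact hα' h'
  · subst a b a' b'
    rw [extendPendant_left, extendPendant_right hvu]; exact hαβ.symm
  · exact absurd (by rw [ha, hb, ha', hb']) hne
  · subst a b
    obtain ⟨-, ha', hb'⟩ := deleteIncidenceSet_adj.1 h'
    rw [extendPendant_right hvu, extendPendant_of_ne ha' hb']; exact hβ' h' (by tauto)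
  · subst a' b'
    obtain ⟨-, ha, hb⟩ := deleteIncidenceSet_adj.1 h
    obtain rfl : a = v := by tauto
    rw [extendPendant_left, extendPendant_of_ne hvu hb]; exact (hα' h).symm
  · subst a' b'
    obtain ⟨-, ha, hb⟩ := deleteIncidenceSet_adj.1 h
    rw [extendPendant_right hvu, extendPendant_of_ne ha hb]; exact (hβ' h (by tauto)).symm
  · obtain ⟨-, ha, hb⟩ := deleteIncidenceSet_adj.1 h
    obtain ⟨-, ha', hb'⟩ := deleteIncidenceSet_adj.1 h'
    rw [extendPendant_of_ne ha hb, extendPendant_of_ne ha' hb']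
    exact hc.1 a b a' b' h h' hne hadj

end PendantExtension

theorem HasIncColoring.of_deleteIncidenceSet_of_pendant [Fintype V] {G : SimpleGraph V}
    [DecidableRel G.Adj] {u v : V} (hu : ∀ w, G.Adj u w ↔ w = v) (hl : 1 ≤ l)
    (hk : G.degree v + l ≤ k) (h : HasIncColoring (G.deleteIncidenceSet u) k l) :
    HasIncColoring G k l := by
  obtain ⟨c, hc⟩ := h
  set G' := G.deleteIncidenceSet u
  have hvu : G.Adj v u := ((hu v).2 rfl).symm
  have hout : (outColors G' c v).ncard + 1 ≤ G.degree v := by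
    have himage := Set.ncard_image_le (f := c v) (s := G'.neighborSet v)
    rw [ncard_neighborSet_deleteIncidenceSet hvu] at himage
    have hpos := G.degree_pos_iff_exists_adj v |>.2 ⟨u, hvu⟩
    unfold outColors
    omega
  obtain ⟨α, hαO, hαI⟩ := Set.exists_notMem_insert_ncard_le
    (hc.disjoint_inColors_outColors v) (Fin.exists_notMem_of_ncard_lt (by omega))
    (hc.ncard_inColors_le v) hl
  obtain ⟨β, hβ⟩ := Fin.exists_notMem_of_ncard_lt
    (s := outColors G' c v ∪ insert α (inColors G' c v))
    ((Set.ncard_union_le _ _).trans_lt (by omega))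
  refine ⟨extendPendant u α β c, extendPendant_proper hu hc ?_ hαO ?_,
    ncard_inColors_extendPendant_le hu hc hl hαI⟩
  · rintro rfl
    exact hβ (.inr (.inl rfl))
  · rintro (h | h)
    exacts [hβ (.inl h), hβ (.inr (.inr h))]

end

theorem stmt_3_general {V : Type*} [Fintype V] (G : SimpleGraph V)
    [DecidableRel G.Adj] (u v : V) (hdeg : G.degree u = 1) (hadj : G.Adj u v)
    (h : HasIncColoring (G.induce {x | x ≠ u}) (G.maxDegree + 2) 2) :
    HasIncColoring G (G.maxDegree + 2) 2 :=
  (h.deleteIncidenceSet_of_induce (Nat.succ_pos _)).of_deleteIncidenceSet_of_pendant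
    (adj_iff_eq_of_degree_eq_one hdeg hadj) one_le_two
    (Nat.add_le_add_right (G.degree_le_maxDegree v) 2)

/-- If a vertex u has degree 1 with neighbor v and G - u has a (Δ+2,2)-incidence
coloring, then so does G. -/
theorem stmt_3 {V : Type*} [Fintype V] [DecidableEq V] (G : SimpleGraph V)
    [DecidableRel G.Adj] (u v : V) (hdeg : G.degree u = 1) (hadj : G.Adj u v)
    (h : HasIncColoring (G.induce {x | x ≠ u}) (G.maxDegree + 2) 2) :
    HasIncColoring G (G.maxDegree + 2) 2 :=
  stmt_3_general G u v hdeg hadj h
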